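/- Let g : ℝ → ℝ be continuous with compact support contained in [a+t_min, b+t_max], strictly positive on (a+t_min, b+t_max), and let u = Fg be its Fourier transform. If v : ℝ → ℂ is another function of the same form arising from data g̃ with the same properties but supported in [ã+t_min, b̃+t_max], and u = v on ℝ, then a = ã and b = b̃. -/

import Mathlib

open MeasureTheory Set
open scoped ContDiff
open FourierTransform SchwartzMap RealInnerProductSpace

noncomputable section

noncomputable def toSch (φ : ℝ → ℝ) (h1 : ContDiff ℝ ∞ φ) (h2 : HasCompactSupport φ) :
    𝓢(ℝ, ℂ) where
  toFun x := (φ x : ℂ)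
  smooth' := Complex.ofRealCLM.contDiff.comp h1
  decay' := by
    intro k n
    have hψ : ContDiff ℝ ∞ (fun x => (φ x : ℂ)) := Complex.ofRealCLM.contDiff.comp h1
    have hψc : HasCompactSupport (fun x => (φ x : ℂ)) :=
      h2.comp_left Complex.ofReal_zero
    have hs : HasCompactSupport (iteratedFDeriv ℝ n (fun x => (φ x : ℂ))) :=
      hψc.iteratedFDeriv n
    have hcont : Continuous fun x : ℝ => ‖x‖ ^ k * ‖iteratedFDeriv ℝ n (fun x => (φ x : ℂ)) x‖ :=
      ((continuous_norm.pow k).mul ((hψ.continuous_iteratedFDeriv (by exact_mod_cast le_top)).norm))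
    have hcs : HasCompactSupport fun x : ℝ =>
        ‖x‖ ^ k * ‖iteratedFDeriv ℝ n (fun x => (φ x : ℂ)) x‖ :=
      (hs.norm).mul_left
    obtain ⟨C, hC⟩ := hcont.bounded_above_of_compact_support hcs
    exact ⟨C, fun x => (Real.le_norm_self _).trans (hC x)⟩

lemma flip_innerL : (innerₗ ℝ).flip = innerₗ ℝ :=
  LinearMap.ext fun x => LinearMap.ext fun y => real_inner_comm x y

lemma eq_zero_of_fourier_eq_zero (h : ℝ → ℂ) (hc : Continuous h) (hs : HasCompactSupport h)
    (hz : ∀ w : ℝ, 𝓕 h w = 0) : ∀ x, h x = 0 := by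
  have hint : Integrable h := hc.integrable_of_hasCompactSupport hs
  have key : ∀ φ : ℝ → ℝ, ContDiff ℝ ∞ φ → HasCompactSupport φ →
      ∫ x, φ x • h x = 0 := by
    intro φ h1 h2
    set Φ := toSch φ h1 h2 with hΦ
    set ψ := (FourierTransform.fourierCLE ℂ 𝓢(ℝ, ℂ)).symm Φ with hψdef
    have hψ : 𝓕 ⇑ψ = ⇑Φ := by
      rw [← SchwartzMap.fourier_coe, ← fourierTransformCLE_apply (R := ℂ) ψ, hψdef,
        (FourierTransform.fourierCLE ℂ 𝓢(ℝ, ℂ)).apply_symm_apply Φ]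
    have mult := VectorFourier.integral_fourierIntegral_smul_eq_flip
      (e := Real.fourierChar) (μ := volume) (ν := volume) (L := innerₗ ℝ)
      Real.continuous_fourierChar continuous_inner ψ.integrable hint
    rw [flip_innerL] at mult
    have hL : VectorFourier.fourierIntegral (E := ℂ) Real.fourierChar volume (innerₗ ℝ) = 𝓕 :=
      rfl
    rw [hL] at mult
    rw [hψ] at mult
    have hzero : ∫ x : ℝ, ⇑ψ x • 𝓕 h x = 0 := by
      simp only [hz, smul_zero, integral_zero]
    rw [hzero] at mult
    have hsm : ∀ x : ℝ, φ x • h x = Φ x • h x := by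
      intro x
      show φ x • h x = (φ x : ℂ) • h x
      rw [Complex.coe_smul]
    simpa [hsm] using mult
  have hae : ∀ᵐ x : ℝ, h x = 0 :=
    ae_eq_zero_of_integral_contDiff_smul_eq_zero hc.locallyIntegrable key
  have := (hc.ae_eq_iff_eq (μ := volume) continuous_const).mp hae
  exact fun x => congrFun this x

lemma endpoints_le {A B A' B' : ℝ} (hAB : A < B) (hsub : Set.Ioo A B ⊆ Set.Icc A' B') :
    A' ≤ A ∧ B ≤ B' := by
  constructor
  · by_contra hcon
    push_neg at hcon
    have h1 : A < min B A' := lt_min hAB hcon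
    have h2 := min_le_left B A'
    have h3 := min_le_right B A'
    have hx : (A + min B A') / 2 ∈ Set.Ioo A B := ⟨by linarith, by linarith⟩
    have := (hsub hx).1
    linarith
  · by_contra hcon
    push_neg at hcon
    have h1 : max A B' < B := max_lt hAB hcon
    have h2 := le_max_left A B'
    have h3 := le_max_right A B'
    have hx : (max A B' + B) / 2 ∈ Set.Ioo A B := ⟨by linarith, by linarith⟩
    have := (hsub hx).2
    linarith

set_option maxHeartbeats 1000000 in

/-- uniqueness of the strip endpoints from the multi-frequency
far-field data at one observation direction: if the Fourier transforms of two
continuous compactly supported profiles (supported in `[a+t_min, b+t_max]`,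
positive inside) coincide for all `k`, then the endpoints coincide. -/
theorem stmt_18 (a b a' b' tmin tmax : ℝ) (ht : tmin < tmax)
    (hab : a < b) (hab' : a' < b')
    (g g' : ℝ → ℝ) (hgc : Continuous g) (hgc' : Continuous g')
    (hcs : HasCompactSupport g) (hcs' : HasCompactSupport g')
    (hsupp : ∀ ξ, ξ ∉ Set.Icc (a + tmin) (b + tmax) → g ξ = 0)
    (hsupp' : ∀ ξ, ξ ∉ Set.Icc (a' + tmin) (b' + tmax) → g' ξ = 0)
    (hpos : ∀ ξ ∈ Set.Ioo (a + tmin) (b + tmax), 0 < g ξ)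
    (hpos' : ∀ ξ ∈ Set.Ioo (a' + tmin) (b' + tmax), 0 < g' ξ)
    (u v : ℝ → ℂ)
    (hu : ∀ k : ℝ, u k = ∫ ξ : ℝ, (g ξ : ℂ) * Complex.exp (-Complex.I * (k : ℂ) * (ξ : ℂ)))
    (hv : ∀ k : ℝ, v k = ∫ ξ : ℝ, (g' ξ : ℂ) * Complex.exp (-Complex.I * (k : ℂ) * (ξ : ℂ)))
    (huv : u = v) :
    a = a' ∧ b = b' := by
  have hgC : Continuous fun ξ : ℝ => (g ξ : ℂ) := Complex.continuous_ofReal.comp hgc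
  have hgC' : Continuous fun ξ : ℝ => (g' ξ : ℂ) := Complex.continuous_ofReal.comp hgc'
  have hgS : HasCompactSupport fun ξ : ℝ => (g ξ : ℂ) := hcs.comp_left Complex.ofReal_zero
  have hgS' : HasCompactSupport fun ξ : ℝ => (g' ξ : ℂ) := hcs'.comp_left Complex.ofReal_zero
  set h : ℝ → ℂ := fun ξ => (g ξ : ℂ) - g' ξ with hh
  have hhc : Continuous h := hgC.sub hgC'
  have hhs : HasCompactSupport h := by
    apply HasCompactSupport.intro (hcs.union hcs')
    intro x hx
    simp only [Set.mem_union, not_or] at hx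
    have e1 : g x = 0 := image_eq_zero_of_notMem_tsupport hx.1
    have e2 : g' x = 0 := image_eq_zero_of_notMem_tsupport hx.2
    simp [hh, e1, e2]
  have hz : ∀ w : ℝ, 𝓕 h w = 0 := by
    intro w
    have hk := congrFun huv (2 * Real.pi * w)
    rw [hu, hv] at hk
    have econt : Continuous fun ξ : ℝ =>
        Complex.exp (-Complex.I * ((2 * Real.pi * w : ℝ) : ℂ) * (ξ : ℂ)) := by
      fun_prop
    have I1 : Integrable (fun ξ : ℝ =>
        (g ξ : ℂ) * Complex.exp (-Complex.I * ((2 * Real.pi * w : ℝ) : ℂ) * (ξ : ℂ))) :=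
      (hgC.mul econt).integrable_of_hasCompactSupport (hgS.mul_right)
    have I2 : Integrable (fun ξ : ℝ =>
        (g' ξ : ℂ) * Complex.exp (-Complex.I * ((2 * Real.pi * w : ℝ) : ℂ) * (ξ : ℂ))) :=
      (hgC'.mul econt).integrable_of_hasCompactSupport (hgS'.mul_right)
    rw [Real.fourier_real_eq_integral_exp_smul]
    have hptwise : ∀ ξ : ℝ, Complex.exp (((-2 * Real.pi * ξ * w : ℝ) : ℂ) * Complex.I) • h ξ
        = (g ξ : ℂ) * Complex.exp (-Complex.I * ((2 * Real.pi * w : ℝ) : ℂ) * (ξ : ℂ))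
          - (g' ξ : ℂ) * Complex.exp (-Complex.I * ((2 * Real.pi * w : ℝ) : ℂ) * (ξ : ℂ)) := by
      intro ξ
      have hinner : ⟪ξ, w⟫ = ξ * w := by simp [RCLike.inner_apply, mul_comm]
      have harg : ((-2 * Real.pi * ξ * w : ℝ) : ℂ) * Complex.I
          = -Complex.I * ((2 * Real.pi * w : ℝ) : ℂ) * (ξ : ℂ) := by
        push_cast; ring
      rw [smul_eq_mul, harg, hh]
      ring
    simp only [hptwise]
    rw [integral_sub I1 I2, hk, sub_self]
  have hgg : ∀ x, g x = g' x := by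
    intro x
    have := eq_zero_of_fourier_eq_zero h hhc hhs hz x
    rw [hh] at this
    have : (g x : ℂ) = g' x := sub_eq_zero.mp this
    exact_mod_cast this
  have hsub1 : Set.Ioo (a + tmin) (b + tmax) ⊆ Set.Icc (a' + tmin) (b' + tmax) := by
    intro x hx
    by_contra hc
    have := hsupp' x hc
    have hgx := hpos x hx
    rw [hgg x, this] at hgx
    exact lt_irrefl 0 hgx
  have hsub2 : Set.Ioo (a' + tmin) (b' + tmax) ⊆ Set.Icc (a + tmin) (b + tmax) := by
    intro x hx
    by_contra hc
    have := hsupp x hc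
    have hgx := hpos' x hx
    rw [← hgg x, this] at hgx
    exact lt_irrefl 0 hgx
  obtain ⟨hA1, hB1⟩ := endpoints_le (by linarith) hsub1
  obtain ⟨hA2, hB2⟩ := endpoints_le (by linarith) hsub2
  constructor <;> linarith
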